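/- arXiv:2001.04036 — 2 statements merged into one kernel-verified Lean document; each statement's English description precedes it below -/
import Mathlib

section
/- Positivity and upper bound of the Lagrange multiplier for the quasi-static profile (Proposition 4.1(ii)): Let κ > 0, V > 0, a < b, and let u ∈ C²([a,b]) satisfy u(a) = u(b) = 0, ∫_a^b u dx = V, and (d/dx)(u'/√(1+(u')²)) − κ u + λ = 0 on (a,b) for a constant λ ∈ ℝ. Then 0 < λ ≤ (κV + 2)/(b − a). -/
/-!
Write `φ(p) = p / √(1 + p²)`, so that the equation says that the flux `φ(u')` has derivative
`κu - λ`. Since `|φ| ≤ 1`, integrating the equation over `[a, b]` gives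
`κV - λ(b - a) = φ(u'(b)) - φ(u'(a)) ≥ -2`. Multiplying it by `u` and integrating by parts, the
boundary terms vanish and `p φ(p) ≥ 0` gives `κ ∫ u² ≤ λ V`; as `∫ u = V ≠ 0`, `∫ u² > 0`.
-/

open Set intervalIntegral Topology

noncomputable def capillaryFlux (p : ℝ) : ℝ := p / √(1 + p ^ 2)

lemma abs_capillaryFlux_le_one (p : ℝ) : |capillaryFlux p| ≤ 1 := by
  have hpos : 0 < √(1 + p ^ 2) := by positivity
  rw [capillaryFlux, abs_div, abs_of_pos hpos, div_le_one hpos, ← Real.sqrt_sq_eq_abs]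
  exact Real.sqrt_le_sqrt (by linarith)

lemma capillaryFlux_mul_self_nonneg (p : ℝ) : 0 ≤ capillaryFlux p * p := by
  rw [capillaryFlux, div_mul_eq_mul_div, ← sq]
  positivity

lemma continuous_capillaryFlux : Continuous capillaryFlux :=
  continuous_id.div (by fun_prop) fun p => by positivity

section Interval

variable {u f : ℝ → ℝ} {a b x : ℝ}

lemma derivWithin_Icc_eventuallyEq_deriv (hx : x ∈ Ioo a b) :
    derivWithin u (Icc a b) =ᶠ[𝓝 x] deriv u := by
  filter_upwards [Ioo_mem_nhds hx.1 hx.2] with y hy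
  exact derivWithin_of_mem_nhds (Icc_mem_nhds hy.1 hy.2)

lemma ContDiffOn.hasDerivAt_derivWithin_Icc (hu : ContDiffOn ℝ 1 u (Icc a b))
    (hx : x ∈ Ioo a b) : HasDerivAt u (derivWithin u (Icc a b) x) x := by
  have hmem := Icc_mem_nhds hx.1 hx.2
  rw [derivWithin_of_mem_nhds hmem]
  exact ((hu.differentiableOn one_ne_zero).differentiableAt hmem).hasDerivAt

/- At `a` and `b`, `deriv u` depends on `u` outside `[a, b]`; the one-sided derivative
`derivWithin u (Icc a b)` agrees with it inside and is continuous up to the endpoints. -/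
lemma continuousOn_capillaryFlux_derivWithin_Icc (hab : a < b)
    (hu : ContDiffOn ℝ 1 u (Icc a b)) :
    ContinuousOn (fun y => capillaryFlux (derivWithin u (Icc a b) y)) (Icc a b) :=
  continuous_capillaryFlux.comp_continuousOn
    (hu.continuousOn_derivWithin (uniqueDiffOn_Icc hab) le_rfl)

lemma hasDerivAt_capillaryFlux_derivWithin_Icc
    (hflux : ∀ x ∈ Ioo a b, HasDerivAt (fun y => capillaryFlux (deriv u y)) (f x) x)
    (hx : x ∈ Ioo a b) :
    HasDerivAt (fun y => capillaryFlux (derivWithin u (Icc a b) y)) (f x) x :=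
  (hflux x hx).congr_of_eventuallyEq
    ((derivWithin_Icc_eventuallyEq_deriv hx).fun_comp capillaryFlux)

variable (hab : a < b) (hu : ContDiffOn ℝ 1 u (Icc a b)) (hf : ContinuousOn f (Icc a b))
  (hflux : ∀ x ∈ Ioo a b, HasDerivAt (fun y => capillaryFlux (deriv u y)) (f x) x)
include hab hu hf hflux

lemma abs_integral_le_two_of_hasDerivAt_capillaryFlux : |∫ x in a..b, f x| ≤ 2 := by
  rw [integral_eq_sub_of_hasDerivAt_of_le hab.le
    (continuousOn_capillaryFlux_derivWithin_Icc hab hu)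
    (fun x hx => hasDerivAt_capillaryFlux_derivWithin_Icc hflux hx)
    (hf.intervalIntegrable_of_Icc hab.le)]
  refine (abs_sub _ _).trans ?_
  linarith [abs_capillaryFlux_le_one (derivWithin u (Icc a b) a),
    abs_capillaryFlux_le_one (derivWithin u (Icc a b) b)]

lemma integral_mul_nonpos_of_hasDerivAt_capillaryFlux (hua : u a = 0) (hub : u b = 0) :
    ∫ x in a..b, f x * u x ≤ 0 := by
  set u' := derivWithin u (Icc a b)
  have hparts := integral_le_sub_of_hasDeriv_right_of_le
    (g := fun x => capillaryFlux (u' x) * u x)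
    (g' := fun x => f x * u x + capillaryFlux (u' x) * u' x) (φ := fun x => f x * u x) hab.le
    ((continuousOn_capillaryFlux_derivWithin_Icc hab hu).mul hu.continuousOn)
    (fun x hx => ((hasDerivAt_capillaryFlux_derivWithin_Icc hflux hx).mul
      (hu.hasDerivAt_derivWithin_Icc hx)).hasDerivWithinAt)
    (hf.mul hu.continuousOn).integrableOn_Icc
    (fun x _ => by linarith [capillaryFlux_mul_self_nonneg (u' x)])
  simpa [hua, hub] using hparts

end Interval

lemma integral_sq_pos_of_integral_ne_zero {u : ℝ → ℝ} {a b : ℝ} (hab : a < b)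
    (hu : ContinuousOn u (Icc a b)) (h : ∫ x in a..b, u x ≠ 0) : 0 < ∫ x in a..b, u x ^ 2 := by
  refine integral_pos hab (hu.pow 2) (fun x _ => sq_nonneg (u x)) ?_
  by_contra! hzero
  have hu0 : EqOn u 0 (uIcc a b) := fun x hx =>
    pow_eq_zero_iff two_ne_zero |>.mp <| le_antisymm (hzero x (uIcc_of_le hab.le ▸ hx)) (sq_nonneg _)
  exact h (by simp [integral_congr hu0])

/-- Positivity and upper bound of the Lagrange multiplier for the
quasi-static profile (Proposition 4.1(ii)). -/
theorem lagrange_multiplier_bounds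
    (κ V a b lam : ℝ) (hκ : 0 < κ) (hV : 0 < V) (hab : a < b)
    (u : ℝ → ℝ) (hu : ContDiffOn ℝ 2 u (Set.Icc a b))
    (hua : u a = 0) (hub : u b = 0)
    (hvol : (∫ x in a..b, u x) = V)
    -- (d/dx)(u'/√(1+(u')²)) − κu + λ = 0 on (a,b), i.e. the flux
    -- u'/√(1+(u')²) has derivative κu − λ there
    (hODE : ∀ x ∈ Set.Ioo a b,
      HasDerivAt (fun y => deriv u y / Real.sqrt (1 + (deriv u y) ^ 2))
        (κ * u x - lam) x) :
    0 < lam ∧ lam ≤ (κ * V + 2) / (b - a) := by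
  have hu1 : ContDiffOn ℝ 1 u (Icc a b) := hu.of_le one_le_two
  have hf : ContinuousOn (fun x => κ * u x - lam) (Icc a b) :=
    (continuousOn_const.mul hu1.continuousOn).sub continuousOn_const
  have hcurv := abs_integral_le_two_of_hasDerivAt_capillaryFlux hab hu1 hf hODE
  have henergy := integral_mul_nonpos_of_hasDerivAt_capillaryFlux hab hu1 hf hODE hua hub
  have hsq := integral_sq_pos_of_integral_ne_zero hab hu1.continuousOn (hvol ▸ hV.ne')
  have hu_int : IntervalIntegrable u MeasureTheory.volume a b :=
    hu1.continuousOn.intervalIntegrable_of_Icc hab.le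
  have hsq_int : IntervalIntegrable (fun x => u x ^ 2) MeasureTheory.volume a b :=
    (hu1.continuousOn.pow 2).intervalIntegrable_of_Icc hab.le
  have htotal : ∫ x in a..b, (κ * u x - lam) = κ * V - lam * (b - a) := by
    rw [integral_sub (hu_int.const_mul κ) intervalIntegrable_const, integral_const_mul, hvol,
      integral_const, smul_eq_mul, mul_comm lam]
  have hmoment : ∫ x in a..b, (κ * u x - lam) * u x = (κ * ∫ x in a..b, u x ^ 2) - lam * V := by
    simp_rw [sub_mul, mul_assoc, ← sq]
    rw [integral_sub (hsq_int.const_mul κ) (hu_int.const_mul lam), integral_const_mul,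
      integral_const_mul, hvol]
  rw [htotal, abs_le] at hcurv
  rw [hmoment] at henergy
  refine ⟨pos_of_mul_pos_left (by linarith [mul_pos hκ hsq]) hV.le, ?_⟩
  rw [le_div_iff₀ (sub_pos.mpr hab)]
  linarith
end

section
/- Relations among contact angle, droplet height and contact point for the quasi-static profile (Lemma 4.3): Let κ > 0, V > 0, u_m > 0, θ ∈ (0, π/2], λ ∈ ℝ. Define J(u) := −κu²/2 + λu + cos θ, and assume J(u_m) = 1 and 0 ≤ J(u) < 1 for all u ∈ [0, u_m). Let X : [0, u_m] → ℝ be continuous with X(u_m) = 0, differentiable on [0, u_m) with X'(u) = −J(u)/√(1 − J(u)²), assume u ↦ J(u)/√(1 − J(u)²) and u ↦ u·J(u)/√(1 − J(u)²) are integrable on [0, u_m], and set b := X(0); assume ∫_0^{u_m} X(u) du = V/2. Then, with Ĵ(v) := (κ u_m²/2)(v − v²) + v + (1 − v) cos θ for v ∈ [0,1], one has u_m² ∫_0^1 v Ĵ(v)/√(1 − Ĵ(v)²) dv = V/2 and b = u_m ∫_0^1 Ĵ(v)/√(1 − Ĵ(v)²) dv. -/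
open MeasureTheory intervalIntegral Set

/-- Relations among contact angle, droplet height and contact point for the
quasi-static profile (Lemma 4.3). -/
theorem contact_angle_height_relations
    (κ V um θ lam : ℝ) (hκ : 0 < κ) (hV : 0 < V) (hum : 0 < um)
    (hθ0 : 0 < θ) (hθ1 : θ ≤ Real.pi / 2)
    (J : ℝ → ℝ) (hJdef : ∀ u, J u = -κ * u ^ 2 / 2 + lam * u + Real.cos θ)
    (hJum : J um = 1)
    (hJrange : ∀ u ∈ Set.Ico (0:ℝ) um, 0 ≤ J u ∧ J u < 1)
    (X : ℝ → ℝ)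
    (hXc : ContinuousOn X (Set.Icc 0 um))
    (hXum : X um = 0)
    (hX' : ∀ u ∈ Set.Ico (0:ℝ) um,
      HasDerivWithinAt X (-(J u) / Real.sqrt (1 - (J u) ^ 2)) (Set.Icc 0 um) u)
    (hint1 : IntervalIntegrable (fun u => J u / Real.sqrt (1 - (J u) ^ 2))
      MeasureTheory.volume 0 um)
    (hint2 : IntervalIntegrable (fun u => u * J u / Real.sqrt (1 - (J u) ^ 2))
      MeasureTheory.volume 0 um)
    (hvol : (∫ u in (0:ℝ)..um, X u) = V / 2) :
    (um ^ 2 * ∫ v in (0:ℝ)..1,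
        v * (κ * um ^ 2 / 2 * (v - v ^ 2) + v + (1 - v) * Real.cos θ)
          / Real.sqrt (1 - (κ * um ^ 2 / 2 * (v - v ^ 2) + v + (1 - v) * Real.cos θ) ^ 2))
      = V / 2
    ∧ X 0 = um * ∫ v in (0:ℝ)..1,
        (κ * um ^ 2 / 2 * (v - v ^ 2) + v + (1 - v) * Real.cos θ)
          / Real.sqrt (1 - (κ * um ^ 2 / 2 * (v - v ^ 2) + v + (1 - v) * Real.cos θ) ^ 2) := by
  set g : ℝ → ℝ := fun u => J u / Real.sqrt (1 - (J u) ^ 2) with hg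
  -- eliminate lam
  have hlamum : lam * um = 1 + κ * um ^ 2 / 2 - Real.cos θ := by
    have h := hJum; rw [hJdef] at h; linarith
  have hJv : ∀ v : ℝ,
      κ * um ^ 2 / 2 * (v - v ^ 2) + v + (1 - v) * Real.cos θ = J (um * v) := by
    intro v
    rw [hJdef]
    linear_combination -v * hlamum
  -- derivative at interior points
  have hXat : ∀ u ∈ Set.Ioo (0:ℝ) um, HasDerivAt X (-(g u)) u := by
    intro u hu
    have h := hX' u ⟨hu.1.le, hu.2⟩
    have hmem : Set.Icc (0:ℝ) um ∈ nhds u := Icc_mem_nhds hu.1 hu.2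
    have := h.hasDerivAt hmem
    simpa [hg, neg_div] using this
  -- FTC for X
  have hFTC : (∫ u in (0:ℝ)..um, -(g u)) = X um - X 0 := by
    apply intervalIntegral.integral_eq_sub_of_hasDeriv_right_of_le hum.le hXc
      (fun u hu => (hXat u hu).hasDerivWithinAt) hint1.neg
  have hb : X 0 = ∫ u in (0:ℝ)..um, g u := by
    rw [intervalIntegral.integral_neg, hXum] at hFTC
    linarith
  -- integrability pieces
  have hXint : IntervalIntegrable X volume 0 um := by
    apply ContinuousOn.intervalIntegrable
    rwa [Set.uIcc_of_le hum.le]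
  have hug : IntervalIntegrable (fun u => u * g u) volume 0 um := by
    simpa [hg, mul_div_assoc] using hint2
  have hugneg : IntervalIntegrable (fun u => -(u * g u)) volume 0 um := hug.neg
  -- FTC for u * X u
  have hGFTC : (∫ u in (0:ℝ)..um, (X u + -(u * g u))) = um * X um - 0 * X 0 := by
    apply intervalIntegral.integral_eq_sub_of_hasDeriv_right_of_le hum.le
    · exact continuousOn_id.mul hXc
    · intro u hu
      have h2 : HasDerivAt (fun x => x * X x) (1 * X u + u * -g u) u :=
        (hasDerivAt_id u).mul (hXat u hu)
      have h3 : (1 : ℝ) * X u + u * -g u = X u + -(u * g u) := by ring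
      rw [h3] at h2
      exact h2.hasDerivWithinAt
    · exact hXint.add hugneg
  have hkey : (∫ u in (0:ℝ)..um, u * g u) = V / 2 := by
    rw [intervalIntegral.integral_add hXint hugneg,
      intervalIntegral.integral_neg, hXum] at hGFTC
    rw [hvol] at hGFTC
    linarith
  -- change of variables
  have hsub1 : (∫ v in (0:ℝ)..1, g (um * v)) = um⁻¹ * ∫ u in (0:ℝ)..um, g u := by
    rw [intervalIntegral.integral_comp_mul_left g hum.ne']
    simp
  have hsub2 : (∫ v in (0:ℝ)..1, (um * v) * g (um * v))
      = um⁻¹ * ∫ u in (0:ℝ)..um, u * g u := by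
    rw [intervalIntegral.integral_comp_mul_left (fun u => u * g u) hum.ne']
    simp
  constructor
  · have heq : (∫ v in (0:ℝ)..1,
        v * (κ * um ^ 2 / 2 * (v - v ^ 2) + v + (1 - v) * Real.cos θ)
          / Real.sqrt (1 - (κ * um ^ 2 / 2 * (v - v ^ 2) + v + (1 - v) * Real.cos θ) ^ 2))
        = um⁻¹ * ∫ v in (0:ℝ)..1, (um * v) * g (um * v) := by
      rw [← intervalIntegral.integral_const_mul]
      apply intervalIntegral.integral_congr
      intro v _
      simp only [hg]
      rw [hJv v, mul_div_assoc,
        show um * v * (J (um * v) / Real.sqrt (1 - J (um * v) ^ 2))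
          = um * (v * (J (um * v) / Real.sqrt (1 - J (um * v) ^ 2))) by ring,
        ← mul_assoc, inv_mul_cancel₀ hum.ne', one_mul]
    rw [heq, hsub2, hkey]
    field_simp
  · have heq : (∫ v in (0:ℝ)..1,
        (κ * um ^ 2 / 2 * (v - v ^ 2) + v + (1 - v) * Real.cos θ)
          / Real.sqrt (1 - (κ * um ^ 2 / 2 * (v - v ^ 2) + v + (1 - v) * Real.cos θ) ^ 2))
        = ∫ v in (0:ℝ)..1, g (um * v) := by
      apply intervalIntegral.integral_congr
      intro v _
      simp only [hg]
      rw [hJv v]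
    rw [heq, hsub1, hb]
    field_simp
end
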